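/- arXiv:1503.00941 — 2 statements merged into one kernel-verified Lean document; each statement's English description precedes it below -/
import Mathlib

section
/- (Density Balance Lemma) For every n ≥ 2, let λ_n = 2⌊n⌋_odd / (3⌊n⌋_odd − 1), where ⌊n⌋_odd is the largest odd integer less than or equal to n. Then: (a) λ_n > 2/3; (b) for every finite set M of goods, every additive valuation v_i with nonnegative item values, every subset S ⊆ M, and all integers k ≥ 1, ℓ ≥ 0 with k + ℓ = n, if v_i(M \ S) ≤ ℓ · λ_n · μ_i(n, M), then μ_i(k, S) ≥ λ_n · μ_i(n, M); and (c) λ_n is the largest real number λ for which the implication in (b) (with λ in place of λ_n) holds for all such M, v_i, S, k, ℓ. -/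
/-!
Write `m = ⌊n⌋_odd` and `λ = 2m / (3m - 1)`. For (b), take an optimal `n`-partition `P` of `M`,
scale so that `μ(n, M) = 1`, and give index `j` the weight `w j = min (v (P j ∩ S)) 1`; the
hypothesis says that the total deficit `∑ (1 - w j)` is at most `ℓ λ`. Greedily split the indices
into inclusion-minimal groups of weight `≥ λ`, leaving a remainder `R` of weight `< λ`.
Minimality forces a group of size `c` to have deficit at least `λ (c - 1)`, except that a pair
only has deficit `> 2 - 2λ`, a loss of `3λ - 2 = 2 / (3m - 1)`. As there are `n ≤ m + 1` indices
and `m` is odd, the losses on pairs are covered by the slack `λ` if `R = ∅` and by `|R| (1 - λ)`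
otherwise, so counting deficits yields at least `n - ℓ = k` groups, i.e. `k` disjoint bundles of
`S` each worth `λ μ(n, M)`. For (c), the bound is attained when `m` bundles of an optimal
partition are split as `λ` inside `S` and `1 - λ` outside, and `ℓ = (m - 1) / 2`.
-/

/-- `P` is a partition of the finite set `S` of goods into `n`
(possibly empty) pairwise disjoint bundles. -/
def IsPartition {ι : Type*} [DecidableEq ι] (n : ℕ) (S : Finset ι)
    (P : Fin n → Finset ι) : Prop :=
  (∀ i j : Fin n, i ≠ j → Disjoint (P i) (P j)) ∧ Finset.univ.biUnion P = S

/-- The `n`-maximin share of an agent with additive valuation given by item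
values `v` with respect to the finite set `S` of goods. -/
noncomputable def mms {ι : Type*} [DecidableEq ι] (n : ℕ) (S : Finset ι)
    (v : ι → ℝ) : ℝ :=
  sSup {x : ℝ | ∃ P : Fin n → Finset ι,
    IsPartition n S P ∧ x = ⨅ j : Fin n, (P j).sum v}

/-- The largest odd integer less than or equal to `n`. -/
def oddFloor (n : ℕ) : ℕ := if n % 2 = 1 then n else n - 1

/-- The density-balance property of a real number `λ` for `n` agents: for every
finite set `M` of goods, every additive nonnegative valuation `v`, every `S ⊆ M`,
and all `k ≥ 1`, `ℓ ≥ 0` with `k + ℓ = n`: if `v(M \ S) ≤ ℓ·λ·μ(n, M)` then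
`μ(k, S) ≥ λ·μ(n, M)`. -/
def DensityBalanceProp (n : ℕ) (lam : ℝ) : Prop :=
  ∀ (ι : Type) [DecidableEq ι], ∀ (M : Finset ι) (v : ι → ℝ),
    (∀ j ∈ M, 0 ≤ v j) → ∀ S ⊆ M, ∀ k ℓ : ℕ, 1 ≤ k → k + ℓ = n →
      (M \ S).sum v ≤ (ℓ : ℝ) * lam * mms n M v → lam * mms n M v ≤ mms k S v

open Finset

noncomputable def densityConst (m : ℕ) : ℝ := 2 * m / (3 * m - 1)

section densityConst

variable {m : ℕ}

lemma three_mul_sub_one_pos (hm : 1 ≤ m) : (0 : ℝ) < 3 * m - 1 := by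
  have : (1 : ℝ) ≤ m := by exact_mod_cast hm
  linarith

lemma densityConst_pos (hm : 1 ≤ m) : 0 < densityConst m :=
  div_pos (by positivity) (three_mul_sub_one_pos hm)

lemma two_thirds_lt_densityConst (hm : 1 ≤ m) : 2 / 3 < densityConst m := by
  rw [densityConst, lt_div_iff₀ (three_mul_sub_one_pos hm)]
  linarith

lemma densityConst_le_one (hm : 1 ≤ m) : densityConst m ≤ 1 := by
  have : (1 : ℝ) ≤ m := by exact_mod_cast hm
  rw [densityConst, div_le_one (three_mul_sub_one_pos hm)]
  linarith

lemma densityConst_le_three_quarters (hm : 3 ≤ m) : densityConst m ≤ 3 / 4 := by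
  have : (3 : ℝ) ≤ m := by exact_mod_cast hm
  rw [densityConst, div_le_iff₀ (three_mul_sub_one_pos (by omega))]
  linarith

lemma densityConst_one : densityConst 1 = 1 := by norm_num [densityConst]

lemma three_mul_densityConst_sub_two (hm : 1 ≤ m) :
    3 * densityConst m - 2 = 2 / (3 * m - 1) := by
  have := (three_mul_sub_one_pos hm).ne'
  rw [densityConst]
  field_simp
  ring

lemma one_sub_densityConst (hm : 1 ≤ m) :
    1 - densityConst m = (m - 1) / (3 * m - 1) := by
  have := (three_mul_sub_one_pos hm).ne'
  rw [densityConst, eq_div_iff this, sub_mul, div_mul_cancel₀ _ this]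
  ring

lemma three_mul_densityConst_sub_two_mul_lt {p : ℕ} (hpm : p < m) :
    (3 * densityConst m - 2) * p < densityConst m := by
  have hm : 1 ≤ m := by omega
  rw [three_mul_densityConst_sub_two hm, densityConst, div_mul_eq_mul_div,
    div_lt_div_iff_of_pos_right (three_mul_sub_one_pos hm)]
  have : (p : ℝ) < m := by exact_mod_cast hpm
  linarith

lemma three_mul_densityConst_sub_two_mul_le {p L : ℕ} (hm : 1 ≤ m) (hpL : 2 * p + L ≤ L * m) :
    (3 * densityConst m - 2) * p ≤ L * (1 - densityConst m) := by
  rw [three_mul_densityConst_sub_two hm, one_sub_densityConst hm, div_mul_eq_mul_div,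
    mul_div_assoc', div_le_div_iff_of_pos_right (three_mul_sub_one_pos hm)]
  have : (2 * p + L : ℝ) ≤ L * m := by exact_mod_cast hpL
  linarith

lemma cast_mul_one_sub_densityConst {ℓ : ℕ} (hm : m = 2 * ℓ + 1) :
    m * (1 - densityConst m) = ℓ * densityConst m := by
  have hm1 : 1 ≤ m := by omega
  have := (three_mul_sub_one_pos hm1).ne'
  rw [one_sub_densityConst hm1, densityConst]
  field_simp
  rw [show (m : ℝ) = 2 * ℓ + 1 by exact_mod_cast hm]
  ring

end densityConst

lemma odd_oddFloor {n : ℕ} (hn : 1 ≤ n) : Odd (oddFloor n) := by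
  rw [oddFloor, Nat.odd_iff]
  split_ifs <;> omega

lemma oddFloor_le (n : ℕ) : oddFloor n ≤ n := by
  rw [oddFloor]
  split_ifs <;> omega

lemma le_oddFloor_add_one (n : ℕ) : n ≤ oddFloor n + 1 := by
  rw [oddFloor]
  split_ifs <;> omega

section Partition

variable {ι : Type*} [DecidableEq ι] {n : ℕ} {S T : Finset ι} {P : Fin n → Finset ι}

lemma IsPartition.subset (hP : IsPartition n S P) (j : Fin n) : P j ⊆ S :=
  hP.2 ▸ subset_biUnion_of_mem P (mem_univ j)

lemma IsPartition.pairwiseDisjoint (hP : IsPartition n S P) (s : Set (Fin n)) :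
    s.PairwiseDisjoint P :=
  fun i _ j _ hij => hP.1 i j hij

lemma IsPartition.sum_eq {M : Type*} [AddCommMonoid M] (hP : IsPartition n S P) (v : ι → M) :
    ∑ j, (P j).sum v = S.sum v := by
  rw [← hP.2, sum_biUnion (hP.pairwiseDisjoint _)]

lemma IsPartition.inter (hP : IsPartition n S P) (T : Finset ι) :
    IsPartition n (S ∩ T) (fun j => P j ∩ T) :=
  ⟨fun i j hij => (hP.1 i j hij).mono inter_subset_left inter_subset_left,
    by rw [← biUnion_inter, hP.2]⟩

lemma IsPartition.sdiff (hP : IsPartition n S P) (T : Finset ι) :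
    IsPartition n (S \ T) (fun j => P j \ T) := by
  refine ⟨fun i j hij => (hP.1 i j hij).mono sdiff_subset sdiff_subset, ?_⟩
  ext x
  simp [← hP.2]

lemma IsPartition.update_union (hP : IsPartition n S P) (hST : Disjoint S T) (i : Fin n) :
    IsPartition n (S ∪ T) (Function.update P i (P i ∪ T)) := by
  have hT : ∀ j, Disjoint (P j) T := fun j => hST.mono_left (hP.subset j)
  refine ⟨fun a b hab => ?_, ?_⟩
  · rcases eq_or_ne a i with rfl | ha
    · rw [Function.update_self, Function.update_of_ne hab.symm]
      exact disjoint_union_left.2 ⟨hP.1 _ _ hab, (hT b).symm⟩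
    · rcases eq_or_ne b i with rfl | hb
      · rw [Function.update_self, Function.update_of_ne ha]
        exact disjoint_union_right.2 ⟨hP.1 _ _ hab, hT a⟩
      · rw [Function.update_of_ne ha, Function.update_of_ne hb]
        exact hP.1 _ _ hab
  · rw [← hP.2]
    ext x
    simp only [mem_biUnion, mem_univ, true_and, mem_union, Function.update_apply]
    constructor
    · rintro ⟨j, hj⟩
      split_ifs at hj with h
      exacts [(mem_union.1 hj).imp (⟨i, ·⟩) id, Or.inl ⟨j, hj⟩]
    · rintro (⟨j, hj⟩ | hx)
      · exact ⟨j, by split_ifs with h; exacts [mem_union_left _ (h ▸ hj), hj]⟩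
      · exact ⟨i, by simp [hx]⟩

lemma exists_isPartition (hn : 0 < n) (S : Finset ι) :
    ∃ P : Fin n → Finset ι, IsPartition n S P := by
  have hempty : IsPartition n (∅ : Finset ι) fun _ => ∅ :=
    ⟨fun _ _ _ => disjoint_bot_left, by ext; simp⟩
  have h := hempty.update_union (disjoint_empty_left S) ⟨0, hn⟩
  rw [empty_union] at h
  exact ⟨_, h⟩

end Partition

section MaximinShare

variable {ι : Type*} [DecidableEq ι] {n k : ℕ} {S T : Finset ι} {v : ι → ℝ} {c : ℝ}

def mmsValues (n : ℕ) (S : Finset ι) (v : ι → ℝ) : Set ℝ :=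
  {x | ∃ P : Fin n → Finset ι, IsPartition n S P ∧ x = ⨅ j : Fin n, (P j).sum v}

lemma mmsValues_finite (n : ℕ) (S : Finset ι) (v : ι → ℝ) : (mmsValues n S v).Finite := by
  refine ((Fintype.piFinset fun _ : Fin n => S.powerset).image
    fun P => ⨅ j, (P j).sum v).finite_toSet.subset ?_
  rintro x ⟨P, hP, rfl⟩
  exact mem_image_of_mem _ (Fintype.mem_piFinset.2 fun j => mem_powerset.2 (hP.subset j))

lemma le_mms (hn : 0 < n) {P : Fin n → Finset ι} (hP : IsPartition n S P)
    (hc : ∀ j, c ≤ (P j).sum v) : c ≤ mms n S v :=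
  have : Nonempty (Fin n) := Fin.pos_iff_nonempty.1 hn
  le_csSup_of_le (mmsValues_finite n S v).bddAbove ⟨P, hP, rfl⟩ (le_ciInf hc)

lemma exists_isPartition_mms_le (hn : 0 < n) (S : Finset ι) (v : ι → ℝ) :
    ∃ P : Fin n → Finset ι, IsPartition n S P ∧ ∀ j, mms n S v ≤ (P j).sum v := by
  obtain ⟨P₀, hP₀⟩ := exists_isPartition hn S
  obtain ⟨P, hP, hmms⟩ : mms n S v ∈ mmsValues n S v :=
    Set.Nonempty.csSup_mem ⟨_, P₀, hP₀, rfl⟩ (mmsValues_finite n S v)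
  exact ⟨P, hP, fun j => hmms ▸ ciInf_le (Set.finite_range _).bddBelow j⟩

lemma mms_nonneg (hn : 0 < n) (hv : ∀ x ∈ S, 0 ≤ v x) : 0 ≤ mms n S v := by
  obtain ⟨P, hP⟩ := exists_isPartition hn S
  exact le_mms hn hP fun j => sum_nonneg fun x hx => hv x (hP.subset j hx)

lemma mms_mono (hn : 0 < n) (hST : S ⊆ T) (hv : ∀ x ∈ T, 0 ≤ v x) :
    mms n S v ≤ mms n T v := by
  obtain ⟨P, hP, hmms⟩ := exists_isPartition_mms_le hn S v
  have hP' := hP.update_union (T := T \ S) disjoint_sdiff ⟨0, hn⟩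
  rw [union_sdiff_of_subset hST] at hP'
  refine le_mms hn hP' fun j => (hmms j).trans <|
    sum_le_sum_of_subset_of_nonneg ?_ fun x hx _ => hv x (hP'.subset j hx)
  rcases eq_or_ne j ⟨0, hn⟩ with rfl | hj
  · simp
  · simp [Function.update_of_ne hj]

lemma le_mms_of_pairwiseDisjoint {β : Type*} (hk : 0 < k) {s : Finset β} (hks : k ≤ #s)
    {A : β → Finset ι} (hA : (s : Set β).PairwiseDisjoint A) (hAS : ∀ b ∈ s, A b ⊆ S)
    (hAc : ∀ b ∈ s, c ≤ (A b).sum v) (hv : ∀ x ∈ S, 0 ≤ v x) : c ≤ mms k S v := by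
  let e : Fin k ↪ s := (Fin.castLEEmb hks).trans s.equivFin.symm.toEmbedding
  have hP : IsPartition k (univ.biUnion fun i => A (e i)) fun i => A (e i) :=
    ⟨fun i j hij => hA (e i).2 (e j).2 fun h => hij (e.injective (Subtype.ext h)), rfl⟩
  calc c ≤ mms k (univ.biUnion fun i => A (e i)) v := le_mms hk hP fun i => hAc _ (e i).2
    _ ≤ mms k S v := mms_mono hk (biUnion_subset.2 fun i _ => hAS _ (e i).2) hv

lemma mms_le_of_sum_lt_two_mul (hk : 0 < k) (hc : 0 < c) (t : ι → ℕ)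
    (hvt : ∀ x ∈ S, v x ≤ c * t x) (ht : S.sum t < 2 * k) : mms k S v ≤ c := by
  obtain ⟨R, hR, hmms⟩ := exists_isPartition_mms_le hk S v
  by_contra! hlt
  have htwo : ∀ i, 2 ≤ (R i).sum t := by
    intro i
    have : c * 1 < c * (((R i).sum t : ℕ) : ℝ) := calc
      c * 1 < mms k S v := by rwa [mul_one]
      _ ≤ (R i).sum v := hmms i
      _ ≤ ∑ x ∈ R i, c * t x := sum_le_sum fun x hx => hvt x (hR.subset i hx)
      _ = c * (((R i).sum t : ℕ) : ℝ) := by push_cast [mul_sum]; rfl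
    have : 1 < (R i).sum t := by exact_mod_cast lt_of_mul_lt_mul_left this hc.le
    omega
  have : 2 * k ≤ S.sum t := calc
    2 * k = ∑ _i : Fin k, 2 := by simp [mul_comm]
    _ ≤ ∑ i, (R i).sum t := sum_le_sum fun i _ => htwo i
    _ = S.sum t := hR.sum_eq t
  omega

end MaximinShare

section Grouping

variable {α : Type*} [DecidableEq α] {Λ : ℝ} {w : α → ℝ} {G T : Finset α}

lemma card_sub_one_mul_sum_lt_of_minimal (hG : Minimal (fun G : Finset α => Λ ≤ G.sum w) G)
    (hne : G.Nonempty) : (#G - 1 : ℝ) * G.sum w < Λ * #G := by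
  have herase : ∀ y ∈ G, G.sum w - w y < Λ := fun y hy => by
    rw [← sum_erase_eq_sub hy]
    exact not_le.1 (hG.not_prop_of_lt (erase_ssubset hy))
  have := sum_lt_sum_of_nonempty hne herase
  simp only [sum_sub_distrib, sum_const, nsmul_eq_mul] at this
  linarith

lemma le_sum_one_sub_of_minimal (hΛ : 0 < Λ) (hΛ34 : Λ ≤ 3 / 4)
    (hG : Minimal (fun G : Finset α => Λ ≤ G.sum w) G) (hw : ∀ x ∈ G, w x ≤ 1) :
    Λ * (#G - 1) - (if #G = 2 then 3 * Λ - 2 else 0) ≤ ∑ x ∈ G, (1 - w x) := by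
  have hne : G.Nonempty := nonempty_of_sum_ne_zero (hΛ.trans_le hG.prop).ne'
  have hlt := card_sub_one_mul_sum_lt_of_minimal hG hne
  have hle : G.sum w ≤ #G := by simpa using sum_le_card_nsmul G w 1 hw
  rw [sum_sub_distrib, sum_const, nsmul_one]
  obtain h | h | h : #G = 1 ∨ #G = 2 ∨ 3 ≤ #G := by have := hne.card_pos; omega
  · rw [h] at hle ⊢
    norm_num at hle ⊢
    exact hle
  · rw [if_pos h]
    rw [h] at hlt ⊢
    norm_num at hlt ⊢
    linarith
  · rw [if_neg (by omega)]
    have h3 : (3 : ℝ) ≤ #G := by exact_mod_cast h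
    -- `(c - 1) (c - w G) > c (c - 1) - Λ c ≥ Λ (c - 1)²` for `c = #G`
    have key : Λ * ((#G - 1) ^ 2 + #G) ≤ #G * (#G - 1) := by nlinarith
    nlinarith

lemma exists_pairwiseDisjoint_minimal_sum_ge (hΛ : 0 < Λ) (w : α → ℝ) (T : Finset α) :
    ∃ 𝒢 : Finset (Finset α), (𝒢 : Set (Finset α)).PairwiseDisjoint id ∧
      (∀ G ∈ 𝒢, G ⊆ T ∧ Minimal (fun G : Finset α => Λ ≤ G.sum w) G) ∧
      (T \ 𝒢.biUnion id).sum w < Λ := by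
  induction T using Finset.strongInduction with
  | H T ih =>
  by_cases hT : Λ ≤ T.sum w
  · obtain ⟨G, hGT, hG⟩ := exists_minimal_le_of_wellFoundedLT (fun G : Finset α => Λ ≤ G.sum w) T hT
    have hGne : G.Nonempty := nonempty_of_sum_ne_zero (hΛ.trans_le hG.prop).ne'
    obtain ⟨𝒢, h𝒢, h𝒢T, hrest⟩ := ih (T \ G) (sdiff_ssubset hGT hGne)
    refine ⟨insert G 𝒢, ?_, ?_, ?_⟩
    · rw [coe_insert]
      exact h𝒢.insert fun H hH _ => disjoint_sdiff.mono_right (h𝒢T H hH).1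
    · simp only [mem_insert, forall_eq_or_imp]
      exact ⟨⟨hGT, hG⟩, fun H hH => ⟨(h𝒢T H hH).1.trans sdiff_subset, (h𝒢T H hH).2⟩⟩
    · rwa [biUnion_insert, id, ← sup_eq_union, ← sdiff_sdiff_left]
  · exact ⟨∅, by simp, by simp, by simpa using hT⟩

lemma sum_eq_sum_sdiff_biUnion_add_sum {M : Type*} [AddCommMonoid M] {𝒢 : Finset (Finset α)}
    (h𝒢 : (𝒢 : Set (Finset α)).PairwiseDisjoint id) (h𝒢T : ∀ G ∈ 𝒢, G ⊆ T) (f : α → M) :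
    T.sum f = (T \ 𝒢.biUnion id).sum f + ∑ G ∈ 𝒢, G.sum f := by
  rw [show ∑ G ∈ 𝒢, G.sum f = (𝒢.biUnion id).sum f from (sum_biUnion h𝒢).symm]
  exact (sum_sdiff (biUnion_subset.2 h𝒢T)).symm

end Grouping

section Accounting

variable {α : Type*} [DecidableEq α] {w : α → ℝ} {m ℓ : ℕ} {T : Finset α}

lemma densityConst_mul_lt_sum_one_sub (hm : 3 ≤ m) (hmo : Odd m) (hT : #T ≤ m + 1)
    (hw : ∀ x ∈ T, w x ≤ 1) {𝒢 : Finset (Finset α)} (h𝒢 : (𝒢 : Set (Finset α)).PairwiseDisjoint id)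
    (h𝒢T : ∀ G ∈ 𝒢, G ⊆ T ∧ Minimal (fun G : Finset α => densityConst m ≤ G.sum w) G)
    (hrest : (T \ 𝒢.biUnion id).sum w < densityConst m) :
    densityConst m * (#T - #𝒢 - 1) < ∑ x ∈ T, (1 - w x) := by
  have hsub : ∀ G ∈ 𝒢, G ⊆ T := fun G hG => (h𝒢T G hG).1
  have hcard := sum_eq_sum_sdiff_biUnion_add_sum h𝒢 hsub fun _ => (1 : ℕ)
  simp only [← card_eq_sum_ones] at hcard
  rw [sum_eq_sum_sdiff_biUnion_add_sum h𝒢 hsub, hcard]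
  generalize T \ 𝒢.biUnion id = L at hrest hcard ⊢
  set Λ := densityConst m
  set C := ∑ G ∈ 𝒢, #G
  set p := ∑ G ∈ 𝒢, if #G = 2 then 1 else 0
  have hp : 2 * p ≤ C := by
    rw [mul_sum]
    exact sum_le_sum fun G _ => by split_ifs <;> omega
  have hgroups : Λ * (C - #𝒢) - (3 * Λ - 2) * p ≤ ∑ G ∈ 𝒢, ∑ x ∈ G, (1 - w x) := calc
    _ = ∑ G ∈ 𝒢, (Λ * (#G - 1) - if #G = 2 then 3 * Λ - 2 else 0) := by
      simp only [C, p, Nat.cast_sum, Nat.cast_ite, Nat.cast_one, Nat.cast_zero, mul_sum,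
        sum_sub_distrib, mul_boole, mul_comm Λ]
      rw [← sum_mul, sum_sub_distrib, sum_const, nsmul_one]
    _ ≤ _ := sum_le_sum fun G hG =>
      le_sum_one_sub_of_minimal (densityConst_pos (by omega))
        (densityConst_le_three_quarters hm) (h𝒢T G hG).2 fun x hx => hw x ((h𝒢T G hG).1 hx)
  push_cast
  rcases L.eq_empty_or_nonempty with rfl | hL
  · have := three_mul_densityConst_sub_two_mul_lt (m := m) (p := p) (by omega)
    simp only [card_empty, sum_empty, CharP.cast_eq_zero]
    linarith
  · have hLsum : (#L : ℝ) - Λ < ∑ x ∈ L, (1 - w x) := by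
      rw [sum_sub_distrib, sum_const, nsmul_one]
      linarith
    -- oddness of `m`: beside a nonempty leftover only `(m - 1) / 2` pairs fit into `T`
    have hpL : 2 * p + #L ≤ #L * m := by
      obtain ⟨r, rfl⟩ := hmo
      have : 2 * p ≤ 2 * r := by have := hL.card_pos; omega
      nlinarith [hL.card_pos]
    have := three_mul_densityConst_sub_two_mul_le (by omega) hpL
    linarith

lemma exists_pairwiseDisjoint_one_le_sum (hT : #T ≤ 2) (hℓ : ℓ < #T) (hw : ∀ x ∈ T, w x ≤ 1)
    (hD : ∑ x ∈ T, (1 - w x) ≤ ℓ) :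
    ∃ 𝒢 : Finset (Finset α), (𝒢 : Set (Finset α)).PairwiseDisjoint id ∧
      (∀ G ∈ 𝒢, G ⊆ T ∧ 1 ≤ G.sum w) ∧ #T ≤ #𝒢 + ℓ := by
  rcases Nat.eq_zero_or_pos ℓ with rfl | hℓ1
  · have hdef : ∀ x ∈ T, 0 ≤ 1 - w x := fun x hx => sub_nonneg.2 (hw x hx)
    have hw1 : ∀ x ∈ T, w x = 1 := fun x hx => by
      have := (sum_eq_zero_iff_of_nonneg hdef).1
        (le_antisymm (by simpa using hD) (sum_nonneg hdef)) x hx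
      linarith
    refine ⟨T.image singleton, ?_, ?_, ?_⟩
    · intro G hG H hH hGH
      simp only [coe_image, Set.mem_image, mem_coe] at hG hH
      obtain ⟨x, -, rfl⟩ := hG
      obtain ⟨y, -, rfl⟩ := hH
      exact disjoint_singleton.2 fun h => hGH (h ▸ rfl)
    · simp only [mem_image, forall_exists_index, and_imp, forall_apply_eq_imp_iff₂]
      exact fun x hx => ⟨singleton_subset_iff.2 hx, by simp [hw1 x hx]⟩
    · rw [card_image_of_injective _ singleton_injective]
      omega
  · obtain ⟨hT2, rfl⟩ : #T = 2 ∧ ℓ = 1 := by omega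
    refine ⟨{T}, by simp, ?_, by simp [hT2]⟩
    simp only [mem_singleton, forall_eq, subset_refl, true_and]
    rw [sum_sub_distrib, sum_const, nsmul_one, hT2] at hD
    norm_num at hD
    linarith

lemma exists_pairwiseDisjoint_densityConst_le_sum (hmo : Odd m) (hT : #T ≤ m + 1) (hℓ : ℓ < #T)
    (hw : ∀ x ∈ T, w x ≤ 1) (hD : ∑ x ∈ T, (1 - w x) ≤ ℓ * densityConst m) :
    ∃ 𝒢 : Finset (Finset α), (𝒢 : Set (Finset α)).PairwiseDisjoint id ∧
      (∀ G ∈ 𝒢, G ⊆ T ∧ densityConst m ≤ G.sum w) ∧ #T ≤ #𝒢 + ℓ := by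
  obtain rfl | hm : m = 1 ∨ 3 ≤ m := by obtain ⟨r, rfl⟩ := hmo; omega
  · -- for `m = 1` a pair loses `3λ - 2 = λ`, which the slack `λ` no longer covers strictly
    rw [densityConst_one, mul_one] at hD
    rw [densityConst_one]
    exact exists_pairwiseDisjoint_one_le_sum hT hℓ hw hD
  have hΛ := densityConst_pos (by omega : 1 ≤ m)
  obtain ⟨𝒢, h𝒢, h𝒢T, hrest⟩ := exists_pairwiseDisjoint_minimal_sum_ge hΛ w T
  refine ⟨𝒢, h𝒢, fun G hG => ⟨(h𝒢T G hG).1, (h𝒢T G hG).2.prop⟩, ?_⟩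
  have hlt := (densityConst_mul_lt_sum_one_sub hm hmo hT hw h𝒢 h𝒢T hrest).trans_le hD
  rw [mul_comm (ℓ : ℝ)] at hlt
  have : (#T : ℝ) < #𝒢 + ℓ + 1 := by linarith [lt_of_mul_lt_mul_left hlt hΛ.le]
  exact_mod_cast Nat.lt_succ_iff.1 (by exact_mod_cast this)

end Accounting

lemma sum_one_sub_min_div_le {ι : Type*} [DecidableEq ι] {n : ℕ} {M : Finset ι} {v : ι → ℝ}
    {P : Fin n → Finset ι} {μ : ℝ} (hμ : 0 < μ) (hP : IsPartition n M P)
    (hPμ : ∀ j, μ ≤ (P j).sum v) (hv : ∀ x ∈ M, 0 ≤ v x) (S : Finset ι) :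
    ∑ j, (1 - min ((P j ∩ S).sum v / μ) 1) ≤ (M \ S).sum v / μ := by
  rw [← (hP.sdiff S).sum_eq, sum_div]
  refine sum_le_sum fun j _ => ?_
  have hsplit := sum_inter_add_sum_sdiff (P j) S v
  have hrest : 0 ≤ (P j \ S).sum v :=
    sum_nonneg fun x hx => hv x (hP.subset j (mem_sdiff.1 hx).1)
  rw [le_div_iff₀ hμ]
  rcases le_total ((P j ∩ S).sum v / μ) 1 with h | h
  · rw [min_eq_left h, sub_mul, div_mul_cancel₀ _ hμ.ne']
    linarith [hPμ j]
  · rw [min_eq_right h]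
    simpa using hrest

theorem densityBalanceProp_densityConst_oddFloor {n : ℕ} (hn : 2 ≤ n) :
    DensityBalanceProp n (densityConst (oddFloor n)) := by
  intro ι _ M v hv S hSM k ℓ hk hkl hMS
  have hn0 : 0 < n := by omega
  have hvS : ∀ x ∈ S, 0 ≤ v x := fun x hx => hv x (hSM hx)
  rcases (mms_nonneg hn0 hv).eq_or_lt with hμ | hμ
  · rw [← hμ, mul_zero]
    exact mms_nonneg hk hvS
  set μ := mms n M v
  obtain ⟨P, hP, hPμ⟩ := exists_isPartition_mms_le hn0 M v
  set w : Fin n → ℝ := fun j => min ((P j ∩ S).sum v / μ) 1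
  have hD : ∑ j, (1 - w j) ≤ ℓ * densityConst (oddFloor n) :=
    (sum_one_sub_min_div_le hμ hP hPμ hv S).trans ((div_le_iff₀ hμ).2 hMS)
  obtain ⟨𝒢, h𝒢, h𝒢T, hcard⟩ := exists_pairwiseDisjoint_densityConst_le_sum
    (odd_oddFloor (by omega)) (T := univ) (by simpa using le_oddFloor_add_one n)
    (by simp; omega) (fun j _ => min_le_right _ _) hD
  rw [card_univ, Fintype.card_fin] at hcard
  have hQ := (hP.inter S).pairwiseDisjoint
  refine le_mms_of_pairwiseDisjoint hk (s := 𝒢) (by omega)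
    (A := fun J : Finset (Fin n) => J.biUnion fun j => P j ∩ S)
    (fun J hJ J' hJ' hJJ' => ?_) (fun J _ => biUnion_subset.2 fun j _ => inter_subset_right)
    (fun J hJ => ?_) hvS
  · exact (disjoint_biUnion_left _ _ _).2 fun j hj => (disjoint_biUnion_right _ _ _).2 fun j' hj' =>
      (hP.inter S).1 j j' fun h => disjoint_left.1 (h𝒢 hJ hJ' hJJ') hj (h ▸ hj')
  · calc densityConst (oddFloor n) * μ ≤ μ * ∑ j ∈ J, w j := by
          rw [mul_comm]
          exact mul_le_mul_of_nonneg_left (h𝒢T J hJ).2 hμ.le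
      _ = ∑ j ∈ J, μ * w j := mul_sum _ _ _
      _ ≤ ∑ j ∈ J, (P j ∩ S).sum v := sum_le_sum fun j _ =>
          (mul_le_mul_of_nonneg_left (min_le_left _ _) hμ.le).trans_eq
            (mul_div_cancel₀ _ hμ.ne')
      _ = (J.biUnion fun j => P j ∩ S).sum v := (sum_biUnion (hQ _)).symm

lemma Fin.sum_boole_val_lt {R : Type*} [AddCommMonoidWithOne R] {m n : ℕ} (hmn : m ≤ n) :
    ∑ j : Fin n, (if (j : ℕ) < m then (1 : R) else 0) = m := by
  rw [sum_boole, Fin.card_filter_val_lt, min_eq_right hmn]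

-- Bundle `j` of the tight instance consists of the goods `(j, true)`, which form `S`, and
-- `(j, false)`; it is worth `Λ + (1 - Λ)` for the first `m` indices and `1 + 0` for the others.
noncomputable def tightValuation (n m : ℕ) (Λ : ℝ) (x : Fin n × Bool) : ℝ :=
  if (x.1 : ℕ) < m then (if x.2 then Λ else 1 - Λ) else (if x.2 then 1 else 0)

section TightValuation

variable {n m k : ℕ} {Λ : ℝ}

lemma tightValuation_nonneg (hΛ0 : 0 ≤ Λ) (hΛ1 : Λ ≤ 1) (x : Fin n × Bool) :
    0 ≤ tightValuation n m Λ x := by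
  unfold tightValuation
  split_ifs <;> linarith

lemma one_le_mms_tightValuation (hn : 0 < n) : 1 ≤ mms n univ (tightValuation n m Λ) := by
  refine le_mms hn (P := fun j => {j} ×ˢ univ) ⟨fun i j hij => ?_, ?_⟩ fun j => ?_
  · exact disjoint_product.2 (Or.inl (disjoint_singleton.2 hij))
  · ext ⟨j, b⟩
    cases b <;> simp
  · simp only [sum_product, sum_singleton, Fintype.sum_bool, tightValuation, ↓reduceIte,
      Bool.false_eq_true]
    split_ifs <;> simp

lemma sum_sdiff_tightValuation (hmn : m ≤ n) :
    (univ \ univ ×ˢ {true}).sum (tightValuation n m Λ) = m * (1 - Λ) := by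
  have : univ \ univ ×ˢ {true} = (univ : Finset (Fin n)) ×ˢ {false} := by
    ext ⟨j, b⟩
    cases b <;> simp
  rw [this, sum_product, ← Fin.sum_boole_val_lt (R := ℝ) hmn, sum_mul]
  exact sum_congr rfl fun j _ => by simp [tightValuation]

-- a bundle of `S` worth more than `Λ` needs two goods of value `Λ` or one of value `1`
lemma mms_tightValuation_le (hk : 0 < k) (hΛ : 1 / 2 ≤ Λ) (hmn : m ≤ n)
    (hmk : 2 * n < 2 * k + m) :
    mms k (univ ×ˢ {true}) (tightValuation n m Λ) ≤ Λ := by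
  refine mms_le_of_sum_lt_two_mul hk (by linarith)
    (fun x => if (x.1 : ℕ) < m then 1 else 2) (fun x hx => ?_) ?_
  · obtain ⟨j, b⟩ := x
    obtain rfl : b = true := by simpa using hx
    simp only [tightValuation, if_true]
    split_ifs <;> push_cast <;> linarith
  · have htwo : ∑ j : Fin n, ((if (j : ℕ) < m then 1 else 2) + if (j : ℕ) < m then 1 else 0)
        = 2 * n := by
      rw [sum_congr rfl fun j _ => show _ = 2 by split_ifs <;> rfl]
      simp [mul_comm]
    rw [sum_add_distrib, Fin.sum_boole_val_lt hmn, Nat.cast_id] at htwo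
    simp only [sum_product, sum_singleton]
    omega

end TightValuation

theorem le_densityConst_oddFloor_of_densityBalanceProp {n : ℕ} (hn : 2 ≤ n) {lam : ℝ}
    (h : DensityBalanceProp n lam) : lam ≤ densityConst (oddFloor n) := by
  set m := oddFloor n
  obtain ⟨ℓ, hmℓ⟩ : ∃ ℓ, m = 2 * ℓ + 1 := odd_oddFloor (by omega)
  have hmn : m ≤ n := oddFloor_le n
  have hΛ : 2 / 3 < densityConst m := two_thirds_lt_densityConst (by omega)
  have hμ : 1 ≤ mms n univ (tightValuation n m (densityConst m)) :=
    one_le_mms_tightValuation (by omega)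
  by_contra! hlt
  have := h _ univ _ (fun x _ => tightValuation_nonneg (by linarith)
      (densityConst_le_one (by omega)) x) _ (subset_univ (univ ×ˢ {true})) (n - ℓ) ℓ
    (by omega) (by omega) (by
      rw [sum_sdiff_tightValuation hmn, cast_mul_one_sub_densityConst hmℓ, mul_assoc]
      gcongr
      nlinarith)
  have := mms_tightValuation_le (by omega) (by linarith) hmn (by omega) |>.trans' this
  nlinarith

/-- Density Balance Lemma: for `n ≥ 2`,
`λ_n = 2⌊n⌋_odd / (3⌊n⌋_odd − 1)` is (a) greater than `2/3` and (b), (c) the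
greatest real number satisfying the density-balance property. -/
theorem density_balance (n : ℕ) (hn : 2 ≤ n) :
    (2 / 3 : ℝ) < 2 * (oddFloor n : ℝ) / (3 * (oddFloor n : ℝ) - 1) ∧
      IsGreatest {lam : ℝ | DensityBalanceProp n lam}
        (2 * (oddFloor n : ℝ) / (3 * (oddFloor n : ℝ) - 1)) :=
  ⟨two_thirds_lt_densityConst (odd_oddFloor (by omega)).pos,
    densityBalanceProp_densityConst_oddFloor hn,
    fun _ => le_densityConst_oddFloor_of_densityBalanceProp hn⟩
end

section
/- Let n ≥ 1 and m = kn for some integer k ≥ 1, and let N = {1, …, n} be agents with additive valuations over M = {1, …, m} such that v_{ij} ∈ {0, 1, 2} for all i, j and the valuations are fully correlated and sorted: v_{i1} ≥ v_{i2} ≥ … ≥ v_{im} for every agent i. Define buckets B_j = { j, n + j, 2n + j, …, (k−1)n + j } for j = 1, …, n. Then for every agent i and every j with 1 ≤ j ≤ ⌈n/2⌉, it holds that v_i(B_j) ≥ μ_i(n, M); that is, every agent is either satisfied (all n buckets have value at least her maximin share) or left-satisfied (at least the ⌈n/2⌉ leftmost buckets do). -/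
/-!
The total value `T` of the goods is an integer, and so is every bundle value, so the maximin
share is at most `⌊T / n⌋`. Each good `m ≥ j` is worth at most the bucket element `t n + j`
just below it, and each bucket element is charged by at most `n` goods this way, while the
`j - 1` goods before `j` are worth at most `2` each. Hence `T ≤ 2 (j - 1) + n v(B_j)`, and
`2 (j - 1) < n` for `j ≤ ⌈n/2⌉`, so `⌊T / n⌋ ≤ v(B_j)`.
-/

open Finset

namespace IsPartition

variable {ι : Type*} [DecidableEq ι] {n : ℕ} {S : Finset ι} {P : Fin n → Finset ι}

lemma subset_s14 (hP : IsPartition n S P) (l : Fin n) : P l ⊆ S :=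
  hP.2 ▸ subset_biUnion_of_mem P (mem_univ l)

lemma sum_sum_eq {M : Type*} [AddCommMonoid M] (hP : IsPartition n S P) (f : ι → M) :
    ∑ l, (P l).sum f = S.sum f := by
  rw [← hP.2, sum_biUnion fun a _ b _ hab => hP.1 a b hab]

end IsPartition

section MaximinShare

variable {ι : Type*} [DecidableEq ι] {n : ℕ} {S : Finset ι}

lemma mms_congr {v v' : ι → ℝ} (h : ∀ x ∈ S, v x = v' x) : mms n S v = mms n S v' := by
  unfold mms
  congr 1
  ext x
  refine exists_congr fun P => and_congr_right fun hP => ?_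
  rw [iInf_congr fun l => sum_congr rfl fun y hy => h y (hP.subset_s14 l hy)]

lemma mms_natCast_le_of_sum_lt (hn : 0 < n) {w : ι → ℕ} {b : ℕ}
    (h : S.sum w < n * (b + 1)) : mms n S (fun x => (w x : ℝ)) ≤ b := by
  refine Real.sSup_le ?_ b.cast_nonneg
  rintro _ ⟨P, hP, rfl⟩
  have : Nonempty (Fin n) := ⟨⟨0, hn⟩⟩
  obtain ⟨l, hl⟩ := Finite.exists_min fun l => (P l).sum w
  have hmin : n * (P l).sum w ≤ S.sum w := by
    calc n * (P l).sum w = ∑ _ : Fin n, (P l).sum w := by simp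
      _ ≤ ∑ l', (P l').sum w := sum_le_sum fun l' _ => hl l'
      _ = S.sum w := hP.sum_sum_eq w
  have hl_le : (P l).sum w ≤ b := Nat.lt_succ_iff.mp (Nat.lt_of_mul_lt_mul_left (hmin.trans_lt h))
  calc ⨅ l', (P l').sum (fun x => (w x : ℝ)) ≤ (P l).sum (fun x => (w x : ℝ)) :=
        ciInf_le (Set.finite_range _).bddBelow l
    _ ≤ b := by exact_mod_cast hl_le

end MaximinShare

section Buckets

variable {n k j : ℕ}

lemma bucket_mem_Icc (hj : 1 ≤ j) (hjn : j ≤ n) {t : ℕ} (ht : t < k) :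
    t * n + j ∈ Icc 1 (k * n) := by
  have : (t + 1) * n ≤ k * n := Nat.mul_le_mul_right n ht
  rw [mem_Icc]
  constructor <;> nlinarith

lemma sum_filter_lt_le {N c : ℕ} {w : ℕ → ℕ} (hc : ∀ m ∈ Icc 1 N, w m ≤ c) :
    ∑ m ∈ Icc 1 N with m < j, w m ≤ (j - 1) * c := by
  have hcard : #{m ∈ Icc 1 N | m < j} ≤ j - 1 := by
    calc #{m ∈ Icc 1 N | m < j} ≤ #(Ico 1 j) :=
          card_le_card fun m hm => by simp only [mem_filter, mem_Icc, mem_Ico] at hm ⊢; omega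
      _ = j - 1 := Nat.card_Ico 1 j
  calc _ ≤ #{m ∈ Icc 1 N | m < j} • c :=
        sum_le_card_nsmul _ _ _ fun m hm => hc m (mem_filter.mp hm).1
    _ ≤ (j - 1) * c := by rw [smul_eq_mul]; gcongr

/-- The good `m ≥ j` is charged to the bucket element `((m - j) / n) * n + j`, the largest one
not exceeding `m`; at most `n` goods are charged to each bucket element. -/
lemma sum_filter_not_lt_le_of_antitoneOn (hj : 1 ≤ j) (hjn : j ≤ n) {w : ℕ → ℕ}
    (hw : AntitoneOn w (Icc 1 (k * n))) :
    ∑ m ∈ Icc 1 (k * n) with ¬m < j, w m ≤ n * ∑ t ∈ range k, w (t * n + j) := by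
  have hn : 0 < n := by omega
  have hmaps : ∀ m ∈ {m ∈ Icc 1 (k * n) | ¬m < j}, (m - j) / n ∈ range k := by
    intro m hm
    simp only [mem_filter, mem_Icc] at hm
    rw [mem_range, Nat.div_lt_iff_lt_mul hn]
    omega
  rw [← sum_fiberwise_of_maps_to hmaps, mul_sum]
  refine sum_le_sum fun t ht => ?_
  have hfiber : ∀ m ∈ {m ∈ {m ∈ Icc 1 (k * n) | ¬m < j} | (m - j) / n = t},
      m ∈ Icc 1 (k * n) ∧ t * n + j ≤ m ∧ m < t * n + j + n := by
    intro m hm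
    simp only [mem_filter, mem_Icc] at hm
    obtain ⟨⟨⟨hm1, hm2⟩, hmj⟩, rfl⟩ := hm
    have hdiv := Nat.div_add_mod' (m - j) n
    have hmod := Nat.mod_lt (m - j) hn
    refine ⟨mem_Icc.mpr ⟨hm1, hm2⟩, ?_, ?_⟩ <;> omega
  calc _ ≤ #{m ∈ {m ∈ Icc 1 (k * n) | ¬m < j} | (m - j) / n = t} • w (t * n + j) :=
        sum_le_card_nsmul _ _ _ fun m hm =>
          hw (bucket_mem_Icc hj hjn (mem_range.mp ht)) (hfiber m hm).1 (hfiber m hm).2.1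
    _ ≤ #(Ico (t * n + j) (t * n + j + n)) • w (t * n + j) := by
        gcongr
        exact fun m hm => mem_Ico.mpr (hfiber m hm).2
    _ = n * w (t * n + j) := by rw [Nat.card_Ico, smul_eq_mul]; congr 1; omega

lemma sum_Icc_le_of_antitoneOn (hj : 1 ≤ j) (hjn : j ≤ n) {w : ℕ → ℕ} {c : ℕ}
    (hw : AntitoneOn w (Icc 1 (k * n))) (hc : ∀ m ∈ Icc 1 (k * n), w m ≤ c) :
    (Icc 1 (k * n)).sum w ≤ (j - 1) * c + n * ∑ t ∈ range k, w (t * n + j) := by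
  rw [← sum_filter_add_sum_filter_not (Icc 1 (k * n)) (· < j)]
  exact add_le_add (sum_filter_lt_le hc) (sum_filter_not_lt_le_of_antitoneOn hj hjn hw)

end Buckets

theorem left_buckets_ge_mms_general
    (n k : ℕ) (hn : 1 ≤ n)
    (v : Fin n → ℕ → ℝ)
    (hval : ∀ i : Fin n, ∀ j ∈ Finset.Icc 1 (k * n), v i j = 0 ∨ v i j = 1 ∨ v i j = 2)
    (hsorted : ∀ i : Fin n, ∀ j₁ ∈ Finset.Icc 1 (k * n), ∀ j₂ ∈ Finset.Icc 1 (k * n),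
      j₁ ≤ j₂ → v i j₂ ≤ v i j₁) :
    ∀ i : Fin n, ∀ j : ℕ, 1 ≤ j → j ≤ (n + 1) / 2 →
      mms n (Finset.Icc 1 (k * n)) (v i) ≤
        (((Finset.range k).image fun t => t * n + j).sum (v i)) := by
  intro i j hj hjn
  set w : ℕ → ℕ := fun m => ⌊v i m⌋₊
  have hvw : ∀ m ∈ Icc 1 (k * n), v i m = w m := fun m hm => by
    rcases hval i m hm with h | h | h <;> simp [w, h]
  have hw2 : ∀ m ∈ Icc 1 (k * n), w m ≤ 2 := fun m hm => by
    rcases hval i m hm with h | h | h <;> simp [w, h]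
  have hanti : AntitoneOn w (Icc 1 (k * n)) := fun a ha b hb hab =>
    Nat.floor_le_floor (hsorted i a ha b hb hab)
  have hbucket : ((range k).image fun t => t * n + j).sum (v i) =
      ((∑ t ∈ range k, w (t * n + j) : ℕ) : ℝ) := by
    rw [sum_image fun a _ b _ hab => Nat.eq_of_mul_eq_mul_right hn (by omega), Nat.cast_sum]
    exact sum_congr rfl fun t ht => hvw _ (bucket_mem_Icc hj (by omega) (mem_range.mp ht))
  rw [mms_congr hvw, hbucket]
  refine mms_natCast_le_of_sum_lt hn ?_
  calc (Icc 1 (k * n)).sum w ≤ (j - 1) * 2 + n * ∑ t ∈ range k, w (t * n + j) :=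
        sum_Icc_le_of_antitoneOn hj (by omega) hanti hw2
    _ < n * (∑ t ∈ range k, w (t * n + j) + 1) := by rw [mul_add_one]; omega

/-- with fully correlated sorted valuations taking values in {0,1,2}
over the goods `M = {1, …, kn}`, every one of the `⌈n/2⌉` leftmost buckets
`B j = {j, n+j, …, (k−1)n+j}` has value at least the maximin share of every agent. -/
theorem left_buckets_ge_mms
    (n k : ℕ) (hn : 1 ≤ n) (hk : 1 ≤ k)
    (v : Fin n → ℕ → ℝ)
    (hval : ∀ i : Fin n, ∀ j ∈ Finset.Icc 1 (k * n), v i j = 0 ∨ v i j = 1 ∨ v i j = 2)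
    (hsorted : ∀ i : Fin n, ∀ j₁ ∈ Finset.Icc 1 (k * n), ∀ j₂ ∈ Finset.Icc 1 (k * n),
      j₁ ≤ j₂ → v i j₂ ≤ v i j₁) :
    ∀ i : Fin n, ∀ j : ℕ, 1 ≤ j → j ≤ (n + 1) / 2 →
      mms n (Finset.Icc 1 (k * n)) (v i) ≤
        (((Finset.range k).image fun t => t * n + j).sum (v i)) :=
  left_buckets_ge_mms_general n k hn v hval hsorted
end
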